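/- arXiv:2404.18014 — 2 statements merged into one kernel-verified Lean document; each statement's English description precedes it below -/
import Mathlib

section
/- Let G be a finite simple graph admitting a layered edge-labelling χ : E(G) → ℕ. Then there exist n and k and an embedding f of G into the k-th layer of Q_n (an isomorphism from G onto a subgraph of that layer) such that for every edge xy of G, χ(xy) equals the direction of the edge f(x)f(y), i.e., the unique coordinate in which f(x) and f(y) differ. -/
open SimpleGraph

/-- The number of ones (`true` coordinates) of a vertex of the hypercube. -/
def onesCount {n : ℕ} (x : Fin n → Bool) : ℕ := (Finset.univ.filter fun i => x i = true).card

/-- The `n`-dimensional hypercube graph `Q_n`. -/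
def cube (n : ℕ) : SimpleGraph (Fin n → Bool) where
  Adj x y := hammingDist x y = 1
  symm := by constructor; intro x y h; rwa [hammingDist_comm]
  loopless := by constructor; intro x h; simp [hammingDist_self] at h

/-- The vertex set of the `k`-th layer of `Q_n`. -/
def layerSet (n k : ℕ) : Set (Fin n → Bool) := {x | onesCount x = k ∨ onesCount x = k + 1}

/-- The `k`-th layer of `Q_n`: the subgraph induced on vertices with `k` or `k+1` ones. -/
def layer (n k : ℕ) : SimpleGraph (layerSet n k) := (cube n).induce (layerSet n k)

/-- `f` is an isomorphism from `G` onto a subgraph of `H`. -/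
def IsEmbedding {V W : Type*} (G : SimpleGraph V) (H : SimpleGraph W) (f : V → W) : Prop :=
  Function.Injective f ∧ ∀ u v, G.Adj u v → H.Adj (f u) (f v)

/-- `f` is an isomorphism from `G` onto an induced subgraph of `H`. -/
def IsInducedEmbedding {V W : Type*} (G : SimpleGraph V) (H : SimpleGraph W) (f : V → W) : Prop :=
  Function.Injective f ∧ ∀ u v, G.Adj u v ↔ H.Adj (f u) (f v)

/-- `G` is cubical: isomorphic to a subgraph of some hypercube. -/
def IsCubical {V : Type*} (G : SimpleGraph V) : Prop :=
  ∃ (n : ℕ) (f : V → (Fin n → Bool)), IsEmbedding G (cube n) f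

/-- `G` is layered: isomorphic to a subgraph of some layer of some hypercube. -/
def IsLayered {V : Type*} (G : SimpleGraph V) : Prop :=
  ∃ (n k : ℕ) (f : V → layerSet n k), IsEmbedding G (layer n k) f

/-- A cubical edge-labelling. -/
def IsCubicalLabelling {V : Type*} (G : SimpleGraph V) (χ : Sym2 V → ℕ) : Prop :=
  (∀ (u : V) (w : G.Walk u u), w.IsCycle → ∀ c : ℕ, Even ((w.edges.map χ).count c)) ∧
  (∀ (u v : V) (w : G.Walk u v), w.IsPath → 0 < w.length →
      ∃ c : ℕ, Odd ((w.edges.map χ).count c))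

/-- A layered edge-labelling. -/
def IsLayeredLabelling {V : Type*} (G : SimpleGraph V) (χ : Sym2 V → ℕ) : Prop :=
  IsCubicalLabelling G χ ∧
  ∀ e₁ ∈ G.edgeSet, ∀ e₂ ∈ G.edgeSet, χ e₁ = χ e₂ →
    ∀ u v, u ∈ e₁ → v ∈ e₂ →
      ∀ (w : G.Walk u v), w.IsPath → (∀ e ∈ w.edges, χ e ≠ χ e₁) → Even w.length

/-- `(G, P)` is `t`-distance-separating. -/
def DistSeparating {V : Type*} (G : SimpleGraph V) (P : Set (Sym2 V)) (t : ℕ) : Prop :=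
  (∃ (n : ℕ) (f : V → (Fin n → Bool)), IsEmbedding G (cube n) f ∧
      ∀ x y : V, s(x, y) ∈ P → hammingDist (f x) (f y) = t) ∧
  (∀ (n k : ℕ) (g : V → layerSet n k), IsEmbedding G (layer n k) g →
      ∃ x y : V, s(x, y) ∈ P ∧ hammingDist (g x).1 (g y).1 = t + 2)
/-!
Condition (i) makes the parity of the number of `c`-labelled edges of a walk depend only on its
endpoints, so after fixing a root in every component each vertex gets a potential in `(ℤ/2)^ℕ`
that changes exactly in coordinate `χ(xy)` along an edge `xy`; condition (ii) makes the
potential injective on each component. Closed walks have even length, so `G` is bipartite.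
The layered condition says that a path between two `c`-edges uses an even number of edges not
labelled `c`; hence all even endpoints of `c`-edges of a component have the same `c`-coordinate,
which we shift to `0`. Then every edge climbs from its even to its odd endpoint by exactly one
`1`, so the number of ones is `s + parity` on a component; a block of padding coordinates per
component raises `s` to a common value and separates the components.
-/

open Finset

section Counting

variable {ι : Type*} [Fintype ι]

theorem card_filter_eq_card_filter_add_one {p q : ι → Prop} [DecidablePred p] [DecidablePred q]
    {i₀ : ι} (hpq : ∀ i ≠ i₀, p i ↔ q i) (hp : ¬ p i₀) (hq : q i₀) :
    #{i | q i} = #{i | p i} + 1 := by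
  classical
  rw [← card_insert_of_notMem (s := {i | p i}) (by simpa using hp)]
  congr 1
  ext i
  by_cases hi : i = i₀
  · simp [hi, hq]
  · simp [hi, hpq i hi]

theorem card_filter_sumElim {κ : Type*} [Fintype κ] (a : ι → Bool) (b : κ → Bool) :
    #{i | Sum.elim a b i} = #{i | a i} + #{j | b j} := by
  simp only [card_filter, Fintype.sum_sum_type, Sum.elim_inl, Sum.elim_inr]
  rfl

theorem card_filter_comp_equiv {κ : Type*} [Fintype κ] (e : ι ≃ κ) (p : κ → Prop)
    [DecidablePred p] : #{i | p (e i)} = #{j | p j} :=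
  card_equiv e (by simp)

theorem card_filter_fst_eq_and_val_lt [DecidableEq ι] (i₀ : ι) {n : ℕ} {t : ι → ℕ}
    (ht : t i₀ ≤ n) : #{p : ι × Fin n | p.1 = i₀ ∧ (p.2 : ℕ) < t p.1} = t i₀ := by
  have : univ.filter (fun p : ι × Fin n => p.1 = i₀ ∧ (p.2 : ℕ) < t p.1) =
      ({i₀} : Finset ι) ×ˢ univ.filter (fun j : Fin n => (j : ℕ) < t i₀) := by
    ext ⟨i, j⟩
    simp only [mem_filter, mem_univ, true_and, mem_product, mem_singleton]
    constructor <;> rintro ⟨rfl, hj⟩ <;> exact ⟨rfl, hj⟩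
  rw [this, card_product, card_singleton, Fin.card_filter_val_lt, one_mul, min_eq_right ht]

end Counting

namespace SimpleGraph.Walk

variable {V : Type*} {G : SimpleGraph V} (χ : Sym2 V → ℕ)

def labelParity {u v : V} (w : G.Walk u v) (c : ℕ) : ZMod 2 := (w.edges.map χ).count c

variable {χ} {u v x : V}

@[simp]
theorem labelParity_nil : (nil : G.Walk u u).labelParity χ = 0 := by
  ext c; simp [labelParity]

theorem labelParity_cons (h : G.Adj u v) (w : G.Walk v x) :
    (cons h w).labelParity χ = Pi.single (χ s(u, v)) 1 + w.labelParity χ := by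
  ext c
  by_cases hc : c = χ s(u, v)
  · subst hc; simp [labelParity, add_comm]
  · simp [labelParity, hc, Ne.symm hc]

@[simp]
theorem labelParity_append (w : G.Walk u v) (w' : G.Walk v x) :
    (w.append w').labelParity χ = w.labelParity χ + w'.labelParity χ := by
  ext c; simp [labelParity, List.count_append]

@[simp]
theorem labelParity_reverse (w : G.Walk u v) : w.reverse.labelParity χ = w.labelParity χ := by
  ext c; simp [labelParity, List.count_reverse]

@[simp]
theorem labelParity_copy {u' v' : V} (w : G.Walk u v) (hu : u = u') (hv : v = v') :
    (w.copy hu hv).labelParity χ = w.labelParity χ := by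
  subst hu hv; rfl

theorem labelParity_apply_eq_zero {w : G.Walk u v} {c : ℕ} (hw : ∀ e ∈ w.edges, χ e ≠ c) :
    w.labelParity χ c = 0 := by
  rw [labelParity, List.count_eq_zero.2 (by simpa using hw), Nat.cast_zero]

theorem labelParity_apply_eq_zero_iff {w : G.Walk u v} {c : ℕ} :
    w.labelParity χ c = 0 ↔ Even ((w.edges.map χ).count c) :=
  ZMod.natCast_eq_zero_iff_even

section Cycles

variable (hcyc : ∀ (u : V) (w : G.Walk u u), w.IsCycle → ∀ c, Even ((w.edges.map χ).count c))
include hcyc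

theorem labelParity_cons_eq_zero_of_isPath (h : G.Adj u v) {q : G.Walk v u} (hq : q.IsPath) :
    (cons h q).labelParity χ = 0 := by
  by_cases he : s(u, v) ∈ q.edges
  · rw [hq.eq_adj_toWalk_of_mem_edges (Sym2.eq_swap ▸ he)]
    simp [labelParity_cons, Sym2.eq_swap, CharTwo.add_self_eq_zero]
  · ext c
    exact labelParity_apply_eq_zero_iff.2 (hcyc u _ ((cons_isCycle_iff q h).2 ⟨hq, he⟩) c)

theorem labelParity_bypass [DecidableEq V] (w : G.Walk u v) :
    w.bypass.labelParity χ = w.labelParity χ := by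
  induction w with
  | nil => rfl
  | cons h p ih =>
    simp only [bypass]
    split_ifs with hs
    · have hsplit := congrArg (labelParity χ) (p.bypass.take_spec hs)
      rw [labelParity_append] at hsplit
      rw [labelParity_cons, ← ih, ← hsplit, ← add_assoc, ← labelParity_cons h,
        labelParity_cons_eq_zero_of_isPath hcyc h ((bypass_isPath p).takeUntil hs), zero_add]
    · rw [labelParity_cons, labelParity_cons, ih]

theorem labelParity_eq_zero (w : G.Walk u u) : w.labelParity χ = 0 := by
  classical
  rw [← labelParity_bypass hcyc, (isPath_iff_nil.1 (bypass_isPath w)).eq_nil, labelParity_nil]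

end Cycles

section Closed

variable (hclosed : ∀ (u : V) (w : G.Walk u u), w.labelParity χ = 0)
include hclosed

theorem labelParity_eq (w w' : G.Walk u v) : w.labelParity χ = w'.labelParity χ := by
  ext c
  simpa [CharTwo.add_eq_zero] using congrFun (hclosed u (w.append w'.reverse)) c

theorem even_length (w : G.Walk u u) : Even w.length := by
  classical
  rw [← length_edges, ← List.length_map (f := χ), ← List.sum_toFinset_count_eq_length]
  exact Finset.even_sum _ fun c _ => labelParity_apply_eq_zero_iff.1 (congrFun (hclosed u w) c)

end Closed

theorem length_cast_eq (heven : ∀ (u : V) (w : G.Walk u u), Even w.length)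
    (w w' : G.Walk u v) : (w.length : ZMod 2) = w'.length := by
  simpa [CharTwo.add_eq_zero] using
    ZMod.natCast_eq_zero_iff_even.2 (heven u (w.append w'.reverse))

theorem exists_eq_append_cons_of_exists_mem_edges (P : Sym2 V → Prop) (p : G.Walk u v)
    (hp : ∃ e ∈ p.edges, P e) :
    ∃ (a b : V) (p₁ : G.Walk u a) (h : G.Adj a b) (p₂ : G.Walk b v),
      p = p₁.append (cons h p₂) ∧ P s(a, b) ∧ ∀ e ∈ p₁.edges, ¬ P e := by
  induction p with
  | nil => simp at hp
  | @cons u w v h q ih =>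
    by_cases hP : P s(u, w)
    · exact ⟨u, w, nil, h, q, rfl, hP, by simp⟩
    · obtain ⟨a, b, p₁, hab, p₂, rfl, hPab, hp₁⟩ : ∃ (a b : V) (p₁ : G.Walk w a) (h : G.Adj a b)
          (p₂ : G.Walk b v), q = p₁.append (cons h p₂) ∧ P s(a, b) ∧ ∀ e ∈ p₁.edges, ¬ P e := by
        refine ih ?_
        obtain ⟨e, he, hPe⟩ := hp
        rcases List.mem_cons.1 (edges_cons h q ▸ he) with rfl | he
        exacts [absurd hPe hP, ⟨e, he, hPe⟩]
      refine ⟨a, b, cons h p₁, hab, p₂, rfl, hPab, ?_⟩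
      simpa [hP] using hp₁

/-- On a path joining endpoints of two `c`-edges, the edges not labelled `c` come in
`c`-free stretches between consecutive `c`-edges, each of even length by the layered condition. -/
theorem labelParity_apply_eq_length_of_isPath
    (hlay : ∀ e₁ ∈ G.edgeSet, ∀ e₂ ∈ G.edgeSet, χ e₁ = χ e₂ → ∀ u v, u ∈ e₁ → v ∈ e₂ →
      ∀ (w : G.Walk u v), w.IsPath → (∀ e ∈ w.edges, χ e ≠ χ e₁) → Even w.length)
    {e₁ e₂ : Sym2 V} (he₁ : e₁ ∈ G.edgeSet) (he₂ : e₂ ∈ G.edgeSet) (hχ : χ e₁ = χ e₂)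
    {p : G.Walk u v} (hp : p.IsPath) (hu : u ∈ e₁) (hv : v ∈ e₂) :
    p.labelParity χ (χ e₁) = p.length := by
  induction hn : p.length using Nat.strong_induction_on generalizing u e₁ p with
  | _ n ih =>
  subst hn
  by_cases hex : ∃ e ∈ p.edges, χ e = χ e₁
  · obtain ⟨a, b, p₁, hab, p₂, rfl, hc, hp₁⟩ :=
      exists_eq_append_cons_of_exists_mem_edges (χ · = χ e₁) p hex
    have hev : Even p₁.length :=
      hlay e₁ he₁ s(a, b) hab hc.symm u a hu (Sym2.mem_mk_left a b) p₁ hp.of_append_left hp₁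
    have ih₂ := ih p₂.length (by simp; omega) (show s(a, b) ∈ G.edgeSet from hab) (hc ▸ hχ)
      hp.of_append_right.of_cons (Sym2.mem_mk_right a b) rfl
    rw [hc] at ih₂
    rw [labelParity_append, labelParity_cons, Pi.add_apply, Pi.add_apply, ih₂, hc,
      labelParity_apply_eq_zero hp₁, length_append, length_cons]
    push_cast
    rw [ZMod.natCast_eq_zero_iff_even.2 hev]
    simp [add_comm]
  · have hfree : ∀ e ∈ p.edges, χ e ≠ χ e₁ := fun e he h => hex ⟨e, he, h⟩
    rw [labelParity_apply_eq_zero hfree,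
      ZMod.natCast_eq_zero_iff_even.2 (hlay e₁ he₁ e₂ he₂ hχ u v hu hv p hp hfree)]

end SimpleGraph.Walk

namespace SimpleGraph

variable {V : Type*} (G : SimpleGraph V) (χ : Sym2 V → ℕ)

noncomputable def rootWalk (v : V) : G.Walk (G.connectedComponentMk v).out v :=
  (ConnectedComponent.exact (G.connectedComponentMk v).out_eq).some

noncomputable def labelPotential (v : V) : ℕ → ZMod 2 := (G.rootWalk v).labelParity χ

noncomputable def lengthParity (v : V) : ZMod 2 := (G.rootWalk v).length

open Classical in
/-- The shift making `layerBit` vanish at the even endpoints of all `c`-edges of `K`, which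
share one value of the potential by `labelPotential_apply_eq_of_lengthParity_eq`. -/
noncomputable def labelOffset (K : G.ConnectedComponent) (c : ℕ) : ZMod 2 :=
  if h : ∃ x, G.connectedComponentMk x = K ∧ G.lengthParity x = 0 ∧ ∃ y, G.Adj x y ∧ χ s(x, y) = c
  then G.labelPotential χ h.choose c else 0

noncomputable def layerBit (v : V) : ℕ → ZMod 2 :=
  G.labelPotential χ v + G.labelOffset χ (G.connectedComponentMk v)

open Classical in
/-- The padding block `K × Fin (m + 1)` is nonzero exactly on the vertices of `K`, where it
carries the `m + 1 - s` ones that bring the even vertices of `K` to `m + 1` ones in total. -/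
noncomputable def layerVector (m : ℕ) (v : V) : Fin m ⊕ G.ConnectedComponent × Fin (m + 1) → Bool :=
  Sum.elim (fun c => G.layerBit χ v c = 1) fun p =>
    p.1 = G.connectedComponentMk v ∧ (p.2 : ℕ) < m + 1 - #{c : Fin m | G.layerBit χ p.1.out c = 1}

variable {G χ} {u v x y : V}

theorem out_connectedComponentMk_eq (w : G.Walk u v) :
    (G.connectedComponentMk u).out = (G.connectedComponentMk v).out := by
  rw [ConnectedComponent.sound w.reachable]

section Bipartite

variable (heven : ∀ (u : V) (w : G.Walk u u), Even w.length)
include heven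

theorem lengthParity_eq_add (w : G.Walk u v) :
    G.lengthParity v = G.lengthParity u + w.length := by
  calc G.lengthParity v
      = ((G.rootWalk v).copy (out_connectedComponentMk_eq w).symm rfl).length := by
        simp [lengthParity]
    _ = ((G.rootWalk u).append w).length := Walk.length_cast_eq heven _ _
    _ = G.lengthParity u + w.length := by simp [lengthParity]

theorem lengthParity_out (K : G.ConnectedComponent) : G.lengthParity K.out = 0 := by
  have hK : (G.connectedComponentMk K.out).out = K.out := congrArg (·.out) K.out_eq
  simpa [lengthParity] using
    ZMod.natCast_eq_zero_iff_even.2 (heven _ ((G.rootWalk K.out).copy hK rfl))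

end Bipartite

section Closed

variable (hclosed : ∀ (u : V) (w : G.Walk u u), w.labelParity χ = 0)
include hclosed

theorem labelPotential_eq_add (w : G.Walk u v) :
    G.labelPotential χ v = G.labelPotential χ u + w.labelParity χ := by
  calc G.labelPotential χ v
      = ((G.rootWalk v).copy (out_connectedComponentMk_eq w).symm rfl).labelParity χ := by
        simp [labelPotential]
    _ = ((G.rootWalk u).append w).labelParity χ := Walk.labelParity_eq hclosed _ _
    _ = G.labelPotential χ u + w.labelParity χ := Walk.labelParity_append _ _

theorem eq_of_labelPotential_eq
    (hpath : ∀ (u v : V) (w : G.Walk u v), w.IsPath → 0 < w.length →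
      ∃ c : ℕ, Odd ((w.edges.map χ).count c))
    (hreach : G.Reachable u v)
    (h : ∀ e ∈ G.edgeSet, G.labelPotential χ u (χ e) = G.labelPotential χ v (χ e)) : u = v := by
  classical
  by_contra huv
  obtain ⟨w⟩ := hreach
  obtain ⟨c, hodd⟩ := hpath u v w.bypass w.bypass_isPath
    (Nat.pos_of_ne_zero fun h0 => huv (Walk.eq_of_length_eq_zero h0))
  obtain ⟨e, he, rfl⟩ := List.mem_map.1 (List.count_pos_iff.1 hodd.pos)
  have hc := congrFun (labelPotential_eq_add hclosed w.bypass) (χ e)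
  rw [Pi.add_apply, h e (w.bypass.edges_subset_edgeSet he), Walk.labelParity,
    ZMod.natCast_eq_one_iff_odd.2 hodd] at hc
  simp at hc

theorem layerBit_eq_add_of_adj (h : G.Adj x y) :
    G.layerBit χ y = G.layerBit χ x + Pi.single (χ s(x, y)) 1 := by
  rw [layerBit, layerBit, ConnectedComponent.connectedComponentMk_eq_of_adj h,
    labelPotential_eq_add hclosed h.toWalk, Walk.labelParity_cons, Walk.labelParity_nil]
  abel

theorem layerVector_ne_iff_of_adj {m : ℕ} (h : G.Adj x y) (hm : χ s(x, y) < m)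
    (i : Fin m ⊕ G.ConnectedComponent × Fin (m + 1)) :
    G.layerVector χ m x i ≠ G.layerVector χ m y i ↔ i = .inl ⟨χ s(x, y), hm⟩ := by
  cases i with
  | inl c =>
    by_cases hc : (c : ℕ) = χ s(x, y)
    · simp [layerVector, layerBit_eq_add_of_adj hclosed h, hc, Fin.ext_iff]
      exact (by decide : ∀ a : ZMod 2, ¬(a = 1 ↔ a = 0)) _
    · simp [layerVector, layerBit_eq_add_of_adj hclosed h, hc, Fin.ext_iff, Pi.single_eq_of_ne]
  | inr p => simp [layerVector, ConnectedComponent.connectedComponentMk_eq_of_adj h]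

theorem layerVector_injective
    (hpath : ∀ (u v : V) (w : G.Walk u v), w.IsPath → 0 < w.length →
      ∃ c : ℕ, Odd ((w.edges.map χ).count c))
    {m : ℕ} (hm : ∀ e ∈ G.edgeSet, χ e < m) : Function.Injective (G.layerVector χ m) := by
  classical
  intro u v huv
  have hreach : G.Reachable u v := by
    have hle : #{c : Fin m | G.layerBit χ (G.connectedComponentMk u).out c = 1} ≤ m :=
      (card_filter_le _ _).trans_eq (card_fin m)
    simpa [layerVector, hle] using congrFun huv (.inr (G.connectedComponentMk u, 0))
  refine eq_of_labelPotential_eq hclosed hpath hreach fun e he => ?_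
  have := congrFun huv (.inl ⟨χ e, hm e he⟩)
  simp only [layerVector, layerBit, ConnectedComponent.sound hreach, Sum.elim_inl,
    Pi.add_apply] at this
  exact add_right_cancel
    ((by decide : ∀ a b : ZMod 2, decide (a = 1) = decide (b = 1) → a = b) _ _ this)

section Layered

variable (hlay : ∀ e₁ ∈ G.edgeSet, ∀ e₂ ∈ G.edgeSet, χ e₁ = χ e₂ → ∀ u v, u ∈ e₁ → v ∈ e₂ →
    ∀ (w : G.Walk u v), w.IsPath → (∀ e ∈ w.edges, χ e ≠ χ e₁) → Even w.length)
include hlay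

theorem labelPotential_apply_eq_of_lengthParity_eq {x' y' : V} (h : G.Adj x y) (h' : G.Adj x' y')
    (hχ : χ s(x, y) = χ s(x', y')) (hreach : G.Reachable x x')
    (hε : G.lengthParity x = G.lengthParity x') :
    G.labelPotential χ x (χ s(x, y)) = G.labelPotential χ x' (χ s(x, y)) := by
  classical
  obtain ⟨w⟩ := hreach
  have hlen := lengthParity_eq_add (fun _ => Walk.even_length hclosed) w.bypass
  rw [hε, left_eq_add] at hlen
  rw [labelPotential_eq_add hclosed w.bypass, Pi.add_apply,
    Walk.labelParity_apply_eq_length_of_isPath hlay h h' hχ w.bypass_isPath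
      (Sym2.mem_mk_left x y) (Sym2.mem_mk_left x' y'), hlen, add_zero]

theorem layerBit_apply_eq_zero (h : G.Adj x y) (hx : G.lengthParity x = 0) :
    G.layerBit χ x (χ s(x, y)) = 0 := by
  have hex : ∃ x₀, G.connectedComponentMk x₀ = G.connectedComponentMk x ∧
      G.lengthParity x₀ = 0 ∧ ∃ y₀, G.Adj x₀ y₀ ∧ χ s(x₀, y₀) = χ s(x, y) :=
    ⟨x, rfl, hx, y, h, rfl⟩
  obtain ⟨hK, hx₀, y₀, h₀, hχ⟩ := hex.choose_spec
  rw [layerBit, Pi.add_apply, labelOffset, dif_pos hex,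
    labelPotential_apply_eq_of_lengthParity_eq hclosed hlay h h₀ hχ.symm
      (ConnectedComponent.exact hK.symm) (hx.trans hx₀.symm),
    CharTwo.add_self_eq_zero]

variable {m : ℕ} (hm : ∀ e ∈ G.edgeSet, χ e < m)
include hm

theorem card_layerBit_eq_add_one_of_adj (h : G.Adj x y) (hx : G.lengthParity x = 0) :
    #{c : Fin m | G.layerBit χ y c = 1} = #{c : Fin m | G.layerBit χ x c = 1} + 1 := by
  have hbit := layerBit_eq_add_of_adj hclosed h
  have h0 := layerBit_apply_eq_zero hclosed hlay h hx
  refine card_filter_eq_card_filter_add_one (i₀ := ⟨χ s(x, y), hm _ h⟩) (fun c hc => ?_)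
    (by simp [h0]) (by simp [hbit, h0])
  rw [hbit, Pi.add_apply, Pi.single_eq_of_ne (fun h => hc (Fin.ext h)), add_zero]

theorem card_layerBit_add_lengthParity_of_adj (h : G.Adj x y) :
    #{c : Fin m | G.layerBit χ x c = 1} + (G.lengthParity y).val =
      #{c : Fin m | G.layerBit χ y c = 1} + (G.lengthParity x).val := by
  have hε : G.lengthParity y = G.lengthParity x + 1 := by
    simpa using lengthParity_eq_add (fun _ => Walk.even_length hclosed) h.toWalk
  obtain hx | hx := (by decide : ∀ a : ZMod 2, a = 0 ∨ a = 1) (G.lengthParity x)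
  · rw [card_layerBit_eq_add_one_of_adj hclosed hlay hm h hx, hε, hx]
    rfl
  · have hy : G.lengthParity y = 0 := by rw [hε, hx]; rfl
    rw [card_layerBit_eq_add_one_of_adj hclosed hlay hm h.symm hy, hy, hx]
    rfl

theorem card_layerBit_add_lengthParity (w : G.Walk u v) :
    #{c : Fin m | G.layerBit χ u c = 1} + (G.lengthParity v).val =
      #{c : Fin m | G.layerBit χ v c = 1} + (G.lengthParity u).val := by
  induction w with
  | nil => rfl
  | cons h p ih =>
    have := card_layerBit_add_lengthParity_of_adj hclosed hlay hm h
    omega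

theorem card_layerVector [Fintype G.ConnectedComponent] (v : V) :
    #{i | G.layerVector χ m v i} = m + 1 + (G.lengthParity v).val := by
  have hle : #{c : Fin m | G.layerBit χ (G.connectedComponentMk v).out c = 1} ≤ m :=
    (card_filter_le _ _).trans_eq (card_fin m)
  have hroot := card_layerBit_add_lengthParity hclosed hlay hm (G.rootWalk v)
  rw [lengthParity_out (fun _ => Walk.even_length hclosed), ZMod.val_zero, add_zero] at hroot
  classical
  rw [layerVector, card_filter_sumElim]
  simp only [decide_eq_true_eq]
  rw [card_filter_fst_eq_and_val_lt (G.connectedComponentMk v)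
    (t := fun K => m + 1 - #{c : Fin m | G.layerBit χ K.out c = 1}) (Nat.sub_le _ _)]
  omega

end Layered

end Closed

end SimpleGraph

theorem exists_layer_embedding_of_sum {V P : Type*} [Fintype P] {G : SimpleGraph V}
    {χ : Sym2 V → ℕ} {m k : ℕ} (F : V → Fin m ⊕ P → Bool) (hF : Function.Injective F)
    (hlayer : ∀ v, #{i | F v i} = k ∨ #{i | F v i} = k + 1)
    (hadj : ∀ x y, G.Adj x y →
      ∃ c : Fin m, (c : ℕ) = χ s(x, y) ∧ ∀ i, F x i ≠ F y i ↔ i = .inl c) :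
    ∃ (n k : ℕ) (f : V → layerSet n k), IsEmbedding G (layer n k) f ∧
      ∀ x y : V, G.Adj x y → ∃ i : Fin n, (i : ℕ) = χ s(x, y) ∧ (f x).1 i ≠ (f y).1 i := by
  classical
  let e : Fin m ⊕ P ≃ Fin (m + Fintype.card P) :=
    (Equiv.sumCongr (Equiv.refl _) (Fintype.equivFin P)).trans finSumFinEquiv
  have hones (v : V) : onesCount (F v ∘ e.symm) = #{i | F v i} :=
    card_filter_comp_equiv e.symm (fun i => F v i = true)
  refine ⟨m + Fintype.card P, k, fun v => ⟨F v ∘ e.symm, ?_⟩, ⟨fun u v huv => ?_, fun x y h => ?_⟩,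
    fun x y h => ?_⟩
  · show onesCount _ = k ∨ onesCount _ = k + 1
    rw [hones]
    exact hlayer v
  · exact hF (e.symm.surjective.injective_comp_right (congrArg Subtype.val huv))
  · obtain ⟨c, -, hc⟩ := hadj x y h
    show hammingDist (F x ∘ e.symm) (F y ∘ e.symm) = 1
    simp only [hammingDist, Function.comp_apply]
    rw [card_filter_comp_equiv e.symm (fun i => F x i ≠ F y i)]
    simp [hc, filter_eq']
  · obtain ⟨c, hcχ, hc⟩ := hadj x y h
    exact ⟨e (.inl c), by simp [e, hcχ], by simpa using (hc _).2 rfl⟩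

/-- A graph admitting a layered edge-labelling embeds into a layer
of some hypercube with the labels as edge directions. -/
theorem embedding_of_layered_labelling {V : Type} [Fintype V]
    (G : SimpleGraph V) (χ : Sym2 V → ℕ) (hχ : IsLayeredLabelling G χ) :
    ∃ (n k : ℕ) (f : V → layerSet n k), IsEmbedding G (layer n k) f ∧
      ∀ x y : V, G.Adj x y →
        ∃ i : Fin n, (i : ℕ) = χ s(x, y) ∧ (f x).1 i ≠ (f y).1 i := by
  classical
  obtain ⟨⟨hcyc, hpath⟩, hlay⟩ := hχ
  have hclosed (u : V) (w : G.Walk u u) := Walk.labelParity_eq_zero hcyc w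
  set m := univ.sup χ + 1
  have hm (e : Sym2 V) (_ : e ∈ G.edgeSet) : χ e < m := Nat.lt_succ_of_le (le_sup (mem_univ e))
  refine exists_layer_embedding_of_sum (k := m + 1) (G.layerVector χ m)
    (layerVector_injective hclosed hpath hm) (fun v => ?_)
    fun x y h => ⟨_, rfl, layerVector_ne_iff_of_adj hclosed h (hm _ h)⟩
  have := (G.lengthParity v).val_lt
  rw [card_layerVector hclosed hlay hm]
  omega
end

section
/- Let k ≥ 2 be even, let T be a finite tree and let P be a set of unordered pairs of vertices of T such that there exist n and an embedding f of T into Q_n with d(f(x), f(y)) = k−2 for every pair {x,y} ∈ P. Let G be the graph obtained from T by adding, for each pair {x,y} ∈ P, k+1 new paths of length k from x to y whose internal vertices are new and pairwise distinct (so the added paths are vertex-disjoint except at the endpoints x and y). Then G is cubical, i.e., G is isomorphic to a subgraph of Q_m for some m. -/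
open SimpleGraph

/-- The graph obtained from `T` by adding, for each pair `p ∈ P`, `k+1` new paths of
length `k` between the two vertices of `p`, internally vertex-disjoint. The internal
vertices of the `j`-th path for the pair `p` are `(p, j, 0), …, (p, j, k-2)`, attached to
the two endpoints of `p` at the two ends. -/
def spindleGraph {V : Type*} (T : SimpleGraph V) (P : Set (Sym2 V)) (k : ℕ) :
    SimpleGraph (V ⊕ (P × Fin (k + 1) × Fin (k - 1))) where
  Adj a b :=
    match a, b with
    | Sum.inl u, Sum.inl v => T.Adj u v
    | Sum.inl u, Sum.inr (p, _, i) =>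
        ((i : ℕ) = 0 ∧ u = (Quot.out (p : Sym2 V)).1) ∨
        ((i : ℕ) = k - 2 ∧ u = (Quot.out (p : Sym2 V)).2)
    | Sum.inr (p, _, i), Sum.inl u =>
        ((i : ℕ) = 0 ∧ u = (Quot.out (p : Sym2 V)).1) ∨
        ((i : ℕ) = k - 2 ∧ u = (Quot.out (p : Sym2 V)).2)
    | Sum.inr (p, j, i), Sum.inr (q, j', i') =>
        p = q ∧ j = j' ∧ ((i : ℕ) + 1 = (i' : ℕ) ∨ (i' : ℕ) + 1 = (i : ℕ))
  symm := by
    constructor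
    rintro (u | ⟨p, j, i⟩) (v | ⟨q, j', i'⟩) h
    · exact T.symm.symm _ _ h
    · exact h
    · exact h
    · obtain ⟨h1, h2, h3⟩ := h
      exact ⟨h1.symm, h2.symm, h3.symm⟩
  loopless := by
    constructor
    rintro (u | ⟨p, j, i⟩) h
    · exact T.loopless.irrefl u h
    · obtain ⟨-, -, h3⟩ := h
      omega

/-! Embed `T` by `f`. For a pair `{x, y}`, `f x` and `f y` differ in `k - 2` coordinates, so a
geodesic of the cube joins them through `k - 1` vertices. Each of the `k + 1` paths of the pair
runs along this geodesic, lifted by a fresh coordinate of its own that the two end edges of the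
path switch on and off. The fresh coordinates separate the paths from each other and from `T`, and
the geodesic separates the vertices of a single path. -/

open Function

section Hamming

variable {ι : Type*} [Fintype ι]

theorem hammingDist_sumElim {κ : Type*} [Fintype κ] (x₁ y₁ : ι → Bool) (x₂ y₂ : κ → Bool) :
    hammingDist (Sum.elim x₁ x₂) (Sum.elim y₁ y₂) = hammingDist x₁ y₁ + hammingDist x₂ y₂ := by
  simp only [hammingDist, Finset.card_filter, Fintype.sum_sum_type, Sum.elim_inl, Sum.elim_inr]
  rfl

theorem hammingDist_comp_equiv {κ : Type*} [Fintype κ] (e : κ ≃ ι) (x y : ι → Bool) :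
    hammingDist (x ∘ e) (y ∘ e) = hammingDist x y := by
  simp only [hammingDist, Finset.card_filter, comp_apply]
  exact e.sum_comp fun i => if x i ≠ y i then 1 else 0

theorem hammingDist_const_false_decide_eq [DecidableEq ι] (r : ι) :
    hammingDist (fun _ => false) (fun q => decide (q = r)) = 1 := by
  rw [hammingDist, Finset.card_eq_one]
  exact ⟨r, by ext q; simp [eq_comm]⟩

variable [DecidableEq ι]

theorem hammingDist_update_le_one (x : ι → Bool) (c : ι) (b : Bool) :
    hammingDist x (update x c b) ≤ 1 := by
  refine (Finset.card_le_card fun i hi => ?_).trans (Finset.card_singleton c).le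
  by_contra hic
  simp_all

theorem hammingDist_update_add_one {x y : ι → Bool} {c : ι} (hc : x c ≠ y c) :
    hammingDist (update x c (y c)) y + 1 = hammingDist x y := by
  have : Finset.univ.filter (fun i => update x c (y c) i ≠ y i) =
      (Finset.univ.filter fun i => x i ≠ y i).erase c := by
    ext i
    by_cases hic : i = c <;> simp [hic]
  rw [hammingDist, hammingDist, this, Finset.card_erase_add_one (by simpa using hc)]

theorem exists_hammingDist_geodesic (x y : ι → Bool) :
    ∃ w : ℕ → ι → Bool, w 0 = x ∧ w (hammingDist x y) = y ∧
      ∀ i j, i ≤ j → j ≤ hammingDist x y → hammingDist (w i) (w j) = j - i := by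
  suffices ∀ d (x : ι → Bool), hammingDist x y = d → ∃ w : ℕ → ι → Bool, w 0 = x ∧ w d = y ∧
      ∀ i j, i ≤ j → j ≤ d → hammingDist (w i) (w j) = j - i from this _ x rfl
  intro d
  induction d with
  | zero =>
    intro x hxy
    exact ⟨fun _ => y, (hammingDist_eq_zero.mp hxy).symm, rfl, fun i j _ hj => by simp; omega⟩
  | succ d ih =>
    intro x hxy
    obtain ⟨c, hc⟩ : ∃ c, x c ≠ y c := by
      by_contra! h
      simp [funext h] at hxy
    have hx' := hammingDist_update_add_one hc
    obtain ⟨w, hw0, hwd, hw⟩ := ih (update x c (y c)) (by omega)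
    refine ⟨fun | 0 => x | i + 1 => w i, rfl, hwd, ?_⟩
    have hx_w : ∀ j ≤ d, hammingDist x (w j) = j + 1 := fun j hj => by
      have upper := hammingDist_triangle x (w 0) (w j)
      have lower := hammingDist_triangle x (w j) (w d)
      have := hammingDist_update_le_one x c (y c)
      rw [hw 0 j (Nat.zero_le j) hj, hw0] at upper
      rw [hw j d hj le_rfl, hwd] at lower
      omega
    rintro (_ | i) (_ | j) hij hj
    · simp
    · simpa using hx_w j (by omega)
    · omega
    · simpa using hw i j (by omega) (by omega)

end Hamming

theorem isCubical_of_hammingDist_eq_one {V ι : Type*} [Fintype ι] {G : SimpleGraph V}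
    {g : V → ι → Bool} (hg : Injective g) (hadj : ∀ u v, G.Adj u v → hammingDist (g u) (g v) = 1) :
    IsCubical G := by
  let e := (Fintype.equivFin ι).symm
  refine ⟨Fintype.card ι, fun v => g v ∘ e, fun u v huv => hg ?_, fun u v huv => ?_⟩
  · funext i
    simpa using congrFun huv (e.symm i)
  · exact (hammingDist_comp_equiv e _ _).trans (hadj u v huv)

section Spindle

variable {V ι : Type*} [DecidableEq V] [Fintype ι] {P : Set (Sym2 V)} {k : ℕ}
  {f : V → ι → Bool} {W : P → ℕ → ι → Bool}

def spindleMap (f : V → ι → Bool) (W : P → ℕ → ι → Bool) (k : ℕ) :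
    V ⊕ (P × Fin (k + 1) × Fin (k - 1)) → ι ⊕ (P × Fin (k + 1)) → Bool
  | .inl u => Sum.elim (f u) fun _ => false
  | .inr (p, j, i) => Sum.elim (W p i) fun q => decide (q = (p, j))

theorem spindleMap_injective (hf : Injective f)
    (hW : ∀ p i j, i ≤ j → j ≤ k - 2 → hammingDist (W p i) (W p j) = j - i) :
    Injective (spindleMap f W k) := by
  have hW_inj : ∀ p (i i' : Fin (k - 1)), W p i = W p i' → i ≤ i' → i = i' := by
    intro p i i' h hii'
    have := hW p i i' hii' (by omega)
    rw [h, hammingDist_self] at this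
    omega
  rintro (u | ⟨p, j, i⟩) (v | ⟨q, j', i'⟩) h
  · exact congrArg Sum.inl (hf (funext fun c => congrFun h (.inl c)))
  · simpa [spindleMap] using congrFun h (.inr (q, j'))
  · simpa [spindleMap] using congrFun h (.inr (p, j))
  · obtain ⟨rfl, rfl⟩ : p = q ∧ j = j' := by simpa [spindleMap] using congrFun h (.inr (p, j))
    have hWi : W p i = W p i' := funext fun c => congrFun h (.inl c)
    rcases le_total i i' with hii' | hi'i
    · rw [hW_inj p i i' hWi hii']
    · rw [hW_inj p i' i hWi.symm hi'i]

theorem spindleMap_adj [Fintype P] {T : SimpleGraph V}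
    (hf : ∀ u v, T.Adj u v → hammingDist (f u) (f v) = 1)
    (hW0 : ∀ p : P, W p 0 = f (Quot.out (p : Sym2 V)).1)
    (hWk : ∀ p : P, W p (k - 2) = f (Quot.out (p : Sym2 V)).2)
    (hW : ∀ p i j, i ≤ j → j ≤ k - 2 → hammingDist (W p i) (W p j) = j - i) (a b)
    (hab : (spindleGraph T P k).Adj a b) :
    hammingDist (spindleMap f W k a) (spindleMap f W k b) = 1 := by
  have endpoint : ∀ u p j (i : Fin (k - 1)), (spindleGraph T P k).Adj (.inl u) (.inr (p, j, i)) →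
      hammingDist (spindleMap f W k (.inl u)) (spindleMap f W k (.inr (p, j, i))) = 1 := by
    rintro u p j i (⟨hi, rfl⟩ | ⟨hi, rfl⟩) <;>
      simp only [spindleMap, hammingDist_sumElim, hi, hW0, hWk, hammingDist_self,
        hammingDist_const_false_decide_eq]
  rcases a with u | ⟨p, j, i⟩ <;> rcases b with v | ⟨q, j', i'⟩
  · simpa [spindleMap, hammingDist_sumElim] using hf u v hab
  · exact endpoint u q j' i' hab
  · rw [hammingDist_comm]
    exact endpoint v p j i hab.symm
  · obtain ⟨rfl, rfl, hii' | hi'i⟩ := hab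
    · simp only [spindleMap, hammingDist_sumElim, hammingDist_self, hW p i i' (by omega) (by omega)]
      omega
    · simp only [spindleMap, hammingDist_sumElim, hammingDist_self, hammingDist_comm (W p i),
        hW p i' i (by omega) (by omega)]
      omega

end Spindle

theorem spindleGraph_isCubical_general {V : Type}
    (k : ℕ) (T : SimpleGraph V)
    (P : Set (Sym2 V))
    (h : ∃ (n : ℕ) (f : V → (Fin n → Bool)), IsEmbedding T (cube n) f ∧
      ∀ x y : V, s(x, y) ∈ P → hammingDist (f x) (f y) = k - 2) :
    IsCubical (spindleGraph T P k) := by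
  classical
  obtain ⟨n, f, ⟨hf_inj, hf_adj⟩, hP⟩ := h
  have : Finite V := Finite.of_injective f hf_inj
  have : Fintype P := Fintype.ofFinite P
  have hP_dist (p : P) :
      hammingDist (f (Quot.out (p : Sym2 V)).1) (f (Quot.out (p : Sym2 V)).2) = k - 2 :=
    hP _ _ (by rw [Sym2.mk, Prod.mk.eta, Quot.out_eq]; exact p.2)
  choose W hW0 hWk hW using fun p : P =>
    exists_hammingDist_geodesic (f (Quot.out (p : Sym2 V)).1) (f (Quot.out (p : Sym2 V)).2)
  simp only [hP_dist] at hWk hW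
  exact isCubical_of_hammingDist_eq_one (spindleMap_injective hf_inj hW)
    (spindleMap_adj hf_adj hW0 hWk hW)

/-- If `T` is a tree admitting an embedding into a hypercube in which
every pair of `P` is at distance `k-2`, then the graph obtained by adding `k+1` spindle
paths of length `k` between each pair of `P` is cubical. -/
theorem spindleGraph_isCubical {V : Type} [Fintype V]
    (k : ℕ) (hk : 2 ≤ k) (hke : Even k) (T : SimpleGraph V) (hT : T.IsTree)
    (P : Set (Sym2 V))
    (h : ∃ (n : ℕ) (f : V → (Fin n → Bool)), IsEmbedding T (cube n) f ∧
      ∀ x y : V, s(x, y) ∈ P → hammingDist (f x) (f y) = k - 2) :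
    IsCubical (spindleGraph T P k) :=
  spindleGraph_isCubical_general k T P h
end
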